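/- Fix d ≥ 1, λ > 0, M ≥ 1 and k ≥ 1. Let f : ℝ^d → ℝ be differentiable, let x_1, …, x_k ∈ ℝ^d and let s_1, …, s_{k−1} ∈ ℝ^d be unit vectors. Set ℓ(k) := max{1, k − M − 1}, C_k := λ I_d + Σ_{j=ℓ(k)}^{k−1} s_j s_jᵀ, b_k := Σ_{j=ℓ(k)}^{k−1} ⟨∇f(x_j), s_j⟩ s_j and g_k := C_k⁻¹ b_k. Then for every unit vector s ∈ ℝ^d, |⟨s, ∇f(x_k) − g_k⟩| ≤ √(d(M+1)/λ) · Σ_{i=ℓ(k)}^{k−1} ‖∇f(x_i) − ∇f(x_{i+1})‖ + √λ · ‖∇f(x_k)‖ · ‖s‖_{C_k⁻¹}, where the sum is interpreted as 0 when k = 1. -/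

import Mathlib

open Matrix Finset

/-- The Euclidean norm on `Fin n → ℝ`. -/
noncomputable def euclNorm {n : ℕ} (v : Fin n → ℝ) : ℝ := Real.sqrt (∑ i, v i ^ 2)

/-!
Since `C *ᵥ ∇f(x_k) = λ ∇f(x_k) + ∑ⱼ ⟨s_j, ∇f(x_k)⟩ s_j`, the error is
`∇f(x_k) - g_k = C⁻¹ (λ ∇f(x_k) + ∑ⱼ ⟨∇f(x_k) - ∇f(x_j), s_j⟩ s_j)`.
The regularization term is bounded by Cauchy–Schwarz for the form `C⁻¹` together with
`C⁻¹ ≤ λ⁻¹ I`. In the drift term each coefficient is at most the telescoped path length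
`∑ ‖∇f(x_i) - ∇f(x_{i+1})‖`, and `∑ⱼ ‖C⁻¹ s_j‖ ≤ √(|window| · d / λ)` because
`λ ‖C⁻¹ s_j‖² ≤ s_jᵀ C⁻¹ s_j` and `∑ⱼ s_jᵀ C⁻¹ s_j = tr (C⁻¹ (C - λ I)) ≤ d`.
-/

section EuclNorm

variable {n : ℕ}

lemma euclNorm_eq_norm_toLp (v : Fin n → ℝ) : euclNorm v = ‖WithLp.toLp 2 v‖ := by
  simp [euclNorm, EuclideanSpace.norm_eq]

lemma euclNorm_nonneg (v : Fin n → ℝ) : 0 ≤ euclNorm v := Real.sqrt_nonneg _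

lemma euclNorm_sq (v : Fin n → ℝ) : euclNorm v ^ 2 = v ⬝ᵥ v := by
  rw [euclNorm_eq_norm_toLp, ← real_inner_self_eq_norm_sq, EuclideanSpace.inner_toLp_toLp,
    star_trivial]

lemma abs_dotProduct_le_euclNorm_mul_euclNorm (v w : Fin n → ℝ) :
    |v ⬝ᵥ w| ≤ euclNorm v * euclNorm w := by
  simpa [euclNorm_eq_norm_toLp, EuclideanSpace.inner_toLp_toLp, dotProduct_comm]
    using abs_real_inner_le_norm (WithLp.toLp 2 v) (WithLp.toLp 2 w)

lemma euclNorm_sub_le_sum_Ico (G : ℕ → Fin n → ℝ) {a b : ℕ} (hab : a ≤ b) :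
    euclNorm (G b - G a) ≤ ∑ i ∈ Ico a b, euclNorm (G i - G (i + 1)) := by
  rw [euclNorm_eq_norm_toLp, WithLp.toLp_sub, ← dist_eq_norm, dist_comm]
  simpa [euclNorm_eq_norm_toLp, dist_eq_norm] using
    dist_le_Ico_sum_dist (fun i => WithLp.toLp 2 (G i)) hab

end EuclNorm

section PosSemidef

variable {m : Type*} [Fintype m]

lemma Matrix.IsSymm.dotProduct_mulVec_comm {B : Matrix m m ℝ} (hB : B.IsSymm) (u v : m → ℝ) :
    v ⬝ᵥ (B *ᵥ u) = u ⬝ᵥ (B *ᵥ v) := by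
  conv_rhs => rw [← hB.eq]
  rw [mulVec_transpose, dotProduct_mulVec, dotProduct_comm]

lemma abs_dotProduct_mulVec_le_sqrt_mul_sqrt {B : Matrix m m ℝ} (hB : B.PosSemidef)
    (u v : m → ℝ) :
    |u ⬝ᵥ (B *ᵥ v)| ≤ √(u ⬝ᵥ (B *ᵥ u)) * √(v ⬝ᵥ (B *ᵥ v)) := by
  classical
  have hcs := LinearMap.BilinForm.apply_mul_apply_le_of_forall_zero_le (toBilin' B)
    (fun w => by simpa [toBilin'_apply'] using hB.dotProduct_mulVec_nonneg w) u v
  simp only [toBilin'_apply'] at hcs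
  rw [(isHermitian_iff_isSymm.mp hB.isHermitian).dotProduct_mulVec_comm u v, ← sq] at hcs
  rw [← Real.sqrt_mul (by simpa using hB.dotProduct_mulVec_nonneg u)]
  exact Real.abs_le_sqrt hcs

end PosSemidef

section LowerBound

variable {n : ℕ} {lam : ℝ} {C : Matrix (Fin n) (Fin n) ℝ}

lemma lam_mul_euclNorm_inv_mulVec_sq_le (hC : ∀ v, lam * (v ⬝ᵥ v) ≤ v ⬝ᵥ (C *ᵥ v))
    (hdet : IsUnit C.det) (v : Fin n → ℝ) :
    lam * euclNorm (C⁻¹ *ᵥ v) ^ 2 ≤ v ⬝ᵥ (C⁻¹ *ᵥ v) := by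
  simpa [euclNorm_sq, mulVec_mulVec, mul_nonsing_inv C hdet, dotProduct_comm v]
    using hC (C⁻¹ *ᵥ v)

lemma dotProduct_inv_mulVec_le (hlam : 0 < lam) (hC : ∀ v, lam * (v ⬝ᵥ v) ≤ v ⬝ᵥ (C *ᵥ v))
    (hdet : IsUnit C.det) (v : Fin n → ℝ) :
    v ⬝ᵥ (C⁻¹ *ᵥ v) ≤ euclNorm v ^ 2 / lam := by
  have hlow := lam_mul_euclNorm_inv_mulVec_sq_le hC hdet v
  have hcs := (le_abs_self _).trans (abs_dotProduct_le_euclNorm_mul_euclNorm v (C⁻¹ *ᵥ v))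
  rw [le_div_iff₀ hlam]
  nlinarith [sq_nonneg (lam * euclNorm (C⁻¹ *ᵥ v) - euclNorm v)]

end LowerBound

section RegGram

variable {ι m : Type*} [Fintype m] [DecidableEq m]

def regGram (lam : ℝ) (F : Finset ι) (u : ι → m → ℝ) : Matrix m m ℝ :=
  lam • 1 + ∑ j ∈ F, vecMulVec (u j) (u j)

variable {lam : ℝ} {F : Finset ι} {u : ι → m → ℝ}

lemma regGram_mulVec (v : m → ℝ) :
    regGram lam F u *ᵥ v = lam • v + ∑ j ∈ F, (u j ⬝ᵥ v) • u j := by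
  simp [regGram, add_mulVec, sum_mulVec, vecMulVec_mulVec, smul_mulVec]

lemma lam_mul_dotProduct_self_le_regGram (v : m → ℝ) :
    lam * (v ⬝ᵥ v) ≤ v ⬝ᵥ (regGram lam F u *ᵥ v) := by
  rw [regGram_mulVec, dotProduct_add, dotProduct_smul, smul_eq_mul, dotProduct_sum,
    le_add_iff_nonneg_right]
  refine sum_nonneg fun j _ => ?_
  rw [dotProduct_smul, smul_eq_mul, dotProduct_comm]
  exact mul_self_nonneg _

lemma regGram_posDef (hlam : 0 < lam) : (regGram lam F u).PosDef :=
  (PosDef.one.smul hlam).add_posSemidef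
    (posSemidef_sum F fun j _ => by simpa using posSemidef_vecMulVec_self_star (u j))

lemma isUnit_det_regGram (hlam : 0 < lam) : IsUnit (regGram lam F u).det :=
  (isUnit_iff_isUnit_det _).mp (regGram_posDef hlam).isUnit

lemma sum_dotProduct_inv_regGram_mulVec_le (hlam : 0 < lam) :
    ∑ j ∈ F, u j ⬝ᵥ ((regGram lam F u)⁻¹ *ᵥ u j) ≤ Fintype.card m := by
  set C := regGram lam F u
  have htrace : ∑ j ∈ F, u j ⬝ᵥ (C⁻¹ *ᵥ u j) = Fintype.card m - lam * C⁻¹.trace := by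
    calc ∑ j ∈ F, u j ⬝ᵥ (C⁻¹ *ᵥ u j) = (C⁻¹ * ∑ j ∈ F, vecMulVec (u j) (u j)).trace := by
          simp [mul_sum, trace_sum, mul_vecMulVec, trace_vecMulVec, dotProduct_comm]
      _ = (C⁻¹ * (C - lam • 1)).trace := by simp [C, regGram]
      _ = Fintype.card m - lam * C⁻¹.trace := by
          simp [mul_sub, nonsing_inv_mul C (isUnit_det_regGram hlam)]
  rw [htrace, sub_le_self_iff]
  exact mul_nonneg hlam.le (regGram_posDef hlam).inv.posSemidef.trace_nonneg

end RegGram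

section Estimator

variable {ι : Type*} {n : ℕ} {lam : ℝ} {F : Finset ι} {u : ι → Fin n → ℝ}

lemma sum_euclNorm_inv_regGram_mulVec_le (hlam : 0 < lam) :
    ∑ j ∈ F, euclNorm ((regGram lam F u)⁻¹ *ᵥ u j) ≤ √(n * #F / lam) := by
  have hsq : ∑ j ∈ F, euclNorm ((regGram lam F u)⁻¹ *ᵥ u j) ^ 2 ≤ n / lam := by
    have htrace : ∑ j ∈ F, u j ⬝ᵥ ((regGram lam F u)⁻¹ *ᵥ u j) ≤ n := by
      simpa using sum_dotProduct_inv_regGram_mulVec_le (F := F) (u := u) hlam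
    rw [le_div_iff₀ hlam, sum_mul]
    refine (sum_le_sum fun j _ => ?_).trans htrace
    rw [mul_comm]
    exact lam_mul_euclNorm_inv_mulVec_sq_le lam_mul_dotProduct_self_le_regGram
      (isUnit_det_regGram hlam) (u j)
  refine Real.le_sqrt_of_sq_le ((sq_sum_le_card_mul_sum_sq).trans ?_)
  rw [mul_comm (n : ℝ), mul_div_assoc]
  gcongr

lemma dotProduct_sub_inv_regGram_mulVec (hlam : 0 < lam) (G : ι → Fin n → ℝ)
    (g v : Fin n → ℝ) :
    v ⬝ᵥ (g - (regGram lam F u)⁻¹ *ᵥ ∑ j ∈ F, (G j ⬝ᵥ u j) • u j) =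
      lam * (v ⬝ᵥ ((regGram lam F u)⁻¹ *ᵥ g)) +
        ∑ j ∈ F, ((g - G j) ⬝ᵥ u j) * (v ⬝ᵥ ((regGram lam F u)⁻¹ *ᵥ u j)) := by
  set C := regGram lam F u
  have hg : g = C⁻¹ *ᵥ (lam • g + ∑ j ∈ F, (u j ⬝ᵥ g) • u j) := by
    rw [← regGram_mulVec, mulVec_mulVec, nonsing_inv_mul C (isUnit_det_regGram hlam),
      one_mulVec]
  conv_lhs => rw [hg]
  simp only [mulVec_add, mulVec_smul, mulVec_sum, dotProduct_add, dotProduct_smul,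
    dotProduct_sum, add_sub_assoc, ← sum_sub_distrib, ← sub_smul, smul_eq_mul, sub_dotProduct,
    dotProduct_comm g]

lemma abs_dotProduct_sub_inv_regGram_mulVec_le (hlam : 0 < lam) (G : ι → Fin n → ℝ)
    (g v : Fin n → ℝ) {T : ℝ} (hT : 0 ≤ T) (hu : ∀ j ∈ F, euclNorm (u j) = 1)
    (hG : ∀ j ∈ F, euclNorm (g - G j) ≤ T) (hv : euclNorm v = 1) :
    |v ⬝ᵥ (g - (regGram lam F u)⁻¹ *ᵥ ∑ j ∈ F, (G j ⬝ᵥ u j) • u j)| ≤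
      √(n * #F / lam) * T + √lam * euclNorm g * √(v ⬝ᵥ ((regGram lam F u)⁻¹ *ᵥ v)) := by
  set B := (regGram lam F u)⁻¹
  have hB : B.PosSemidef := (regGram_posDef hlam).inv.posSemidef
  have hbias : lam * |v ⬝ᵥ (B *ᵥ g)| ≤ √lam * euclNorm g * √(v ⬝ᵥ (B *ᵥ v)) := by
    have hg : √(lam * (g ⬝ᵥ (B *ᵥ g))) ≤ euclNorm g := by
      refine Real.sqrt_le_iff.mpr ⟨euclNorm_nonneg g, ?_⟩
      rw [mul_comm, ← le_div_iff₀ hlam]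
      exact dotProduct_inv_mulVec_le hlam lam_mul_dotProduct_self_le_regGram
        (isUnit_det_regGram hlam) g
    calc lam * |v ⬝ᵥ (B *ᵥ g)| ≤ lam * (√(v ⬝ᵥ (B *ᵥ v)) * √(g ⬝ᵥ (B *ᵥ g))) :=
          mul_le_mul_of_nonneg_left (abs_dotProduct_mulVec_le_sqrt_mul_sqrt hB v g) hlam.le
      _ = √lam * √(lam * (g ⬝ᵥ (B *ᵥ g))) * √(v ⬝ᵥ (B *ᵥ v)) := by
          rw [Real.sqrt_mul hlam.le, ← mul_assoc √lam, Real.mul_self_sqrt hlam.le]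
          ring
      _ ≤ √lam * euclNorm g * √(v ⬝ᵥ (B *ᵥ v)) := by gcongr
  have hvar : ∀ j ∈ F, |((g - G j) ⬝ᵥ u j) * (v ⬝ᵥ (B *ᵥ u j))| ≤ T * euclNorm (B *ᵥ u j) := by
    intro j hj
    rw [abs_mul]
    refine mul_le_mul ?_ ?_ (abs_nonneg _) hT
    · simpa [hu j hj] using (abs_dotProduct_le_euclNorm_mul_euclNorm _ _).trans
        (mul_le_mul_of_nonneg_right (hG j hj) (euclNorm_nonneg (u j)))
    · simpa [hv] using abs_dotProduct_le_euclNorm_mul_euclNorm v (B *ᵥ u j)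
  rw [dotProduct_sub_inv_regGram_mulVec hlam]
  calc _ ≤ lam * |v ⬝ᵥ (B *ᵥ g)| + ∑ j ∈ F, |((g - G j) ⬝ᵥ u j) * (v ⬝ᵥ (B *ᵥ u j))| := by
        refine (abs_add_le _ _).trans (add_le_add ?_ (abs_sum_le_sum_abs _ _))
        rw [abs_mul, abs_of_pos hlam]
    _ ≤ √lam * euclNorm g * √(v ⬝ᵥ (B *ᵥ v)) + T * ∑ j ∈ F, euclNorm (B *ᵥ u j) := by
        rw [mul_sum]
        exact add_le_add hbias (sum_le_sum hvar)
    _ ≤ _ := by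
        rw [add_comm, mul_comm _ T]
        gcongr
        exact sum_euclNorm_inv_regGram_mulVec_le hlam

end Estimator

theorem stmt_4_general (d M k : ℕ)
    (lam : ℝ) (hlam : 0 < lam)
    (gradf : (Fin d → ℝ) → Fin d → ℝ)
    (x : ℕ → Fin d → ℝ) (s : ℕ → Fin d → ℝ)
    (hs : ∀ j ∈ Finset.Icc 1 (k - 1), euclNorm (s j) = 1)
    (C : Matrix (Fin d) (Fin d) ℝ) (b gk : Fin d → ℝ)
    (hC : C = lam • (1 : Matrix (Fin d) (Fin d) ℝ) +
      ∑ j ∈ Finset.Icc (max 1 (k - M - 1)) (k - 1), vecMulVec (s j) (s j))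
    (hb : b = ∑ j ∈ Finset.Icc (max 1 (k - M - 1)) (k - 1), (gradf (x j) ⬝ᵥ s j) • s j)
    (hgk : gk = C⁻¹ *ᵥ b) :
    ∀ sv : Fin d → ℝ, euclNorm sv = 1 →
      |sv ⬝ᵥ (gradf (x k) - gk)| ≤
        Real.sqrt ((d : ℝ) * ((M : ℝ) + 1) / lam) *
          (∑ i ∈ Finset.Icc (max 1 (k - M - 1)) (k - 1),
            euclNorm (gradf (x i) - gradf (x (i + 1)))) +
        Real.sqrt lam * euclNorm (gradf (x k)) * Real.sqrt (sv ⬝ᵥ (C⁻¹ *ᵥ sv)) := by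
  intro sv hsv
  set F := Icc (max 1 (k - M - 1)) (k - 1) with hF
  set T := ∑ i ∈ F, euclNorm (gradf (x i) - gradf (x (i + 1)))
  have hT : 0 ≤ T := sum_nonneg fun i _ => euclNorm_nonneg _
  have hsF : ∀ j ∈ F, euclNorm (s j) = 1 := fun j hj =>
    hs j (Icc_subset_Icc_left (le_max_left _ _) hj)
  have hgradF : ∀ j ∈ F, euclNorm (gradf (x k) - gradf (x j)) ≤ T := by
    intro j hj
    have hjk : j ≤ k := by rw [hF, mem_Icc] at hj; omega
    refine (euclNorm_sub_le_sum_Ico (fun i => gradf (x i)) hjk).trans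
      (sum_le_sum_of_subset_of_nonneg ?_ fun i _ _ => euclNorm_nonneg _)
    intro i hi
    rw [hF, mem_Icc] at hj ⊢
    rw [mem_Ico] at hi
    omega
  have hcard : (#F : ℝ) ≤ M + 1 := by
    have : #F ≤ M + 1 := by rw [hF, Nat.card_Icc]; omega
    exact_mod_cast this
  subst hC hb hgk
  calc _ ≤ √(d * #F / lam) * T + √lam * euclNorm (gradf (x k)) *
        √(sv ⬝ᵥ ((regGram lam F s)⁻¹ *ᵥ sv)) :=
        abs_dotProduct_sub_inv_regGram_mulVec_le hlam (fun j => gradf (x j)) _ _ hT hsF hgradF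
          hsv
    _ ≤ _ := by gcongr √(_ * ?_ / _) * _ + _

/-- Gradient estimation error of the sliding-window regularized least-squares
estimator (Lemma 3.1). -/
theorem stmt_4 (d M k : ℕ) (hd : 1 ≤ d) (hM : 1 ≤ M) (hk : 1 ≤ k)
    (lam : ℝ) (hlam : 0 < lam)
    (f : (Fin d → ℝ) → ℝ) (gradf : (Fin d → ℝ) → Fin d → ℝ)
    (hdiff : Differentiable ℝ f)
    (hgrad : ∀ x v, fderiv ℝ f x v = gradf x ⬝ᵥ v)
    (x : ℕ → Fin d → ℝ) (s : ℕ → Fin d → ℝ)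
    (hs : ∀ j ∈ Finset.Icc 1 (k - 1), euclNorm (s j) = 1)
    (C : Matrix (Fin d) (Fin d) ℝ) (b gk : Fin d → ℝ)
    (hC : C = lam • (1 : Matrix (Fin d) (Fin d) ℝ) +
      ∑ j ∈ Finset.Icc (max 1 (k - M - 1)) (k - 1), vecMulVec (s j) (s j))
    (hb : b = ∑ j ∈ Finset.Icc (max 1 (k - M - 1)) (k - 1), (gradf (x j) ⬝ᵥ s j) • s j)
    (hgk : gk = C⁻¹ *ᵥ b) :
    ∀ sv : Fin d → ℝ, euclNorm sv = 1 →
      |sv ⬝ᵥ (gradf (x k) - gk)| ≤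
        Real.sqrt ((d : ℝ) * ((M : ℝ) + 1) / lam) *
          (∑ i ∈ Finset.Icc (max 1 (k - M - 1)) (k - 1),
            euclNorm (gradf (x i) - gradf (x (i + 1)))) +
        Real.sqrt lam * euclNorm (gradf (x k)) * Real.sqrt (sv ⬝ᵥ (C⁻¹ *ᵥ sv)) :=
  stmt_4_general d M k lam hlam gradf x s hs C b gk hC hb hgk
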